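/- There is no binary self-orthogonal [72,7,34] code; that is, no 7-dimensional self-orthogonal subspace of F_2^72 has minimum distance 34. -/

import Mathlib

open Finset

/-- Hamming weight of a binary vector. -/
def wt {ι : Type*} [Fintype ι] (x : ι → ZMod 2) : ℕ :=
  (Finset.univ.filter fun i => x i ≠ 0).card

/-- A binary linear code is self-orthogonal if any two codewords are orthogonal. -/
def SelfOrthogonal {ι : Type*} [Fintype ι] (C : Submodule (ZMod 2) (ι → ZMod 2)) : Prop :=
  ∀ x ∈ C, ∀ y ∈ C, ∑ i, x i * y i = 0

/-- `C` has minimum distance exactly `d`: some nonzero codeword has weight `d`,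
and every nonzero codeword has weight at least `d`. -/
def HasMinDist {ι : Type*} [Fintype ι] (C : Submodule (ZMod 2) (ι → ZMod 2)) (d : ℕ) : Prop :=
  (∃ x ∈ C, x ≠ 0 ∧ wt x = d) ∧ ∀ x ∈ C, x ≠ 0 → d ≤ wt x

/-- The Griesmer function `g(k,d) = ∑_{i=0}^{k-1} ⌈d/2^i⌉` (ceiling division). -/
def griesmerBound (k d : ℕ) : ℕ :=
  ∑ i ∈ Finset.range k, (d + 2 ^ i - 1) / 2 ^ i

/-! Self-orthogonality makes every weight `wt x` and every overlap `wt (x * y)` even, so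
`x ↦ wt x / 2 (mod 2)` is linear on `C`. Its kernel, the doubly-even subcode, has dimension at
least `6`, and its weights, being at least `34` and divisible by `4`, are at least `36`. The
Griesmer bound, proved by passing to the residual code of a word of minimum weight, then asks
for at least `36 + 18 + 9 + 5 + 3 + 2 = 73 > 72` coordinates. -/

lemma pi_zmod_two_mul_self {ι : Type*} (x : ι → ZMod 2) : x * x = x :=
  funext fun i => (sq (x i)).symm.trans (ZMod.pow_card _)

section Weight

variable {ι : Type*} [Fintype ι]

lemma wt_eq_sum_val (x : ι → ZMod 2) : wt x = ∑ i, (x i).val := by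
  rw [wt, card_filter]
  refine sum_congr rfl fun i _ => ?_
  generalize x i = a
  revert a
  decide

lemma wt_eq_zero {x : ι → ZMod 2} : wt x = 0 ↔ x = 0 :=
  hammingNorm_eq_zero

lemma natCast_wt (x : ι → ZMod 2) : (wt x : ZMod 2) = ∑ i, x i := by
  simp [wt_eq_sum_val]

lemma wt_add_add_two_mul_wt_mul (x y : ι → ZMod 2) :
    wt (x + y) + 2 * wt (x * y) = wt x + wt y := by
  simp only [wt_eq_sum_val, mul_sum, ← sum_add_distrib]
  refine sum_congr rfl fun i _ => ?_
  simp only [Pi.add_apply, Pi.mul_apply]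
  generalize x i = a
  generalize y i = b
  revert a b
  decide

end Weight

namespace SelfOrthogonal

variable {ι : Type*} [Fintype ι] {C : Submodule (ZMod 2) (ι → ZMod 2)}

lemma two_dvd_wt_mul (hC : SelfOrthogonal C) {x y : ι → ZMod 2} (hx : x ∈ C) (hy : y ∈ C) :
    2 ∣ wt (x * y) := by
  rw [← ZMod.natCast_eq_zero_iff, natCast_wt]
  exact hC x hx y hy

lemma two_dvd_wt (hC : SelfOrthogonal C) {x : ι → ZMod 2} (hx : x ∈ C) : 2 ∣ wt x := by
  simpa [pi_zmod_two_mul_self] using hC.two_dvd_wt_mul hx hx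

/-- Since all weights and overlaps are even, `wt (x + y) / 2 = wt x / 2 + wt y / 2 - wt (x * y)`
makes half the weight additive modulo 2. -/
def halfWtMod2 (hC : SelfOrthogonal C) : C →ₗ[ZMod 2] ZMod 2 :=
  AddMonoidHom.toZModLinearMap 2
    { toFun := fun x => ((wt (x : ι → ZMod 2) / 2 : ℕ) : ZMod 2)
      map_zero' := by simp [wt]
      map_add' := fun x y => by
        have hsum := wt_add_add_two_mul_wt_mul (x : ι → ZMod 2) y
        obtain ⟨a, ha⟩ := hC.two_dvd_wt x.2
        obtain ⟨b, hb⟩ := hC.two_dvd_wt y.2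
        obtain ⟨c, hc⟩ := hC.two_dvd_wt (C.add_mem x.2 y.2)
        obtain ⟨m, hm⟩ := hC.two_dvd_wt_mul x.2 y.2
        have hcab : c + 2 * m = a + b := by omega
        simp only [Submodule.coe_add, hc, ha, hb, Nat.mul_div_cancel_left _ two_pos]
        have hcab' := congrArg (Nat.cast : ℕ → ZMod 2) hcab
        push_cast at hcab'
        rw [← hcab', show (2 : ZMod 2) = 0 from rfl]
        ring }

lemma halfWtMod2_apply (hC : SelfOrthogonal C) (x : C) :
    hC.halfWtMod2 x = ((wt (x : ι → ZMod 2) / 2 : ℕ) : ZMod 2) :=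
  rfl

/-- The codewords of weight divisible by `4`. -/
def doublyEvenSubcode (hC : SelfOrthogonal C) : Submodule (ZMod 2) (ι → ZMod 2) :=
  (LinearMap.ker hC.halfWtMod2).map C.subtype

lemma finrank_le_finrank_doublyEvenSubcode_add_one (hC : SelfOrthogonal C) :
    Module.finrank (ZMod 2) C ≤ Module.finrank (ZMod 2) hC.doublyEvenSubcode + 1 := by
  rw [doublyEvenSubcode, Submodule.finrank_map_subtype_eq,
    ← LinearMap.finrank_range_add_finrank_ker hC.halfWtMod2]
  have := Submodule.finrank_le (LinearMap.range hC.halfWtMod2)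
  rw [Module.finrank_self] at this
  omega

lemma four_dvd_wt_of_mem_doublyEvenSubcode (hC : SelfOrthogonal C) {x : ι → ZMod 2}
    (hx : x ∈ hC.doublyEvenSubcode) : 4 ∣ wt x := by
  obtain ⟨x, hx, rfl⟩ := hx
  rw [SetLike.mem_coe, LinearMap.mem_ker, halfWtMod2_apply, ZMod.natCast_eq_zero_iff] at hx
  obtain ⟨a, ha⟩ := hC.two_dvd_wt x.2
  simp only [Submodule.subtype_apply]
  omega

end SelfOrthogonal

lemma griesmerBound_succ (k : ℕ) {d : ℕ} (hd : 0 < d) :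
    griesmerBound (k + 1) d = d + griesmerBound k ((d + 1) / 2) := by
  rw [griesmerBound, sum_range_succ', pow_zero, Nat.add_sub_cancel, Nat.div_one, add_comm]
  congr 1
  refine sum_congr rfl fun i _ => ?_
  have h2i : 0 < 2 ^ i := by positivity
  rw [show d + 2 ^ (i + 1) - 1 = (d - 1) + 2 ^ (i + 1) by omega,
    show (d + 1) / 2 + 2 ^ i - 1 = (d - 1) / 2 + 2 ^ i by omega,
    Nat.add_div_right _ (by positivity), Nat.add_div_right _ h2i, Nat.div_div_eq_div_mul,
    pow_succ']

/-- Multiplication by `1 + z` zeroes the coordinates in the support of `z`. It replaces puncturing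
there, so the index type stays fixed and the coordinates still in use are tracked by a finset. -/
def residualMap {ι : Type*} (z : ι → ZMod 2) : (ι → ZMod 2) →ₗ[ZMod 2] (ι → ZMod 2) :=
  LinearMap.mulRight (ZMod 2) (1 + z)

lemma residualMap_apply {ι : Type*} (z y : ι → ZMod 2) : residualMap z y = y * (1 + z) :=
  rfl

lemma residualMap_self {ι : Type*} (z : ι → ZMod 2) : residualMap z z = 0 := by
  funext i
  simp only [residualMap_apply, Pi.mul_apply, Pi.add_apply, Pi.one_apply, Pi.zero_apply]
  generalize z i = a
  revert a
  decide

lemma two_mul_wt_residualMap_add {ι : Type*} [Fintype ι] (z y : ι → ZMod 2) :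
    2 * wt (residualMap z y) + wt z = wt y + wt (y + z) := by
  have hres := wt_add_add_two_mul_wt_mul y (y * z)
  have hyz := wt_add_add_two_mul_wt_mul y z
  rw [← mul_assoc, pi_zmod_two_mul_self, ← mul_one_add y z] at hres
  rw [residualMap_apply]
  omega

lemma apply_eq_zero_of_mem_map_residualMap {ι : Type*} {C : Submodule (ZMod 2) (ι → ZMod 2)}
    {S : Finset ι} (hS : ∀ x ∈ C, ∀ i ∉ S, x i = 0)
    (z : ι → ZMod 2) {b : ι → ZMod 2} (hb : b ∈ C.map (residualMap z)) {i : ι}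
    (hi : i ∉ S.filter (z · = 0)) : b i = 0 := by
  obtain ⟨y, hyC, rfl⟩ := hb
  rw [mem_filter, not_and_or] at hi
  rw [residualMap_apply, Pi.mul_apply]
  rcases hi with hiS | hzi
  · rw [hS y hyC i hiS, zero_mul]
  · have h1z : 1 + z i = 0 := by
      generalize z i = a at hzi
      revert a
      decide
    rw [Pi.add_apply, Pi.one_apply, h1z, mul_zero]

section Griesmer

variable {ι : Type*} [Fintype ι] {C : Submodule (ZMod 2) (ι → ZMod 2)}

lemma exists_mem_ne_zero_forall_wt_le (hC : C ≠ ⊥) :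
    ∃ z ∈ C, z ≠ 0 ∧ ∀ x ∈ C, x ≠ 0 → wt z ≤ wt x := by
  obtain ⟨z, ⟨hzC, hz0⟩, hz⟩ := Set.exists_min_image {x | x ∈ C ∧ x ≠ 0} wt (Set.toFinite _)
    (Submodule.exists_mem_ne_zero_of_ne_bot hC)
  exact ⟨z, hzC, hz0, fun x hx hx0 => hz x ⟨hx, hx0⟩⟩

lemma card_filter_eq_zero_add_wt {S : Finset ι} {z : ι → ZMod 2} (hzS : ∀ i ∉ S, z i = 0) :
    #(S.filter (z · = 0)) + wt z = #S := by
  rw [← card_filter_add_card_filter_not (s := S) (z · = 0), wt]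
  congr 2
  ext i
  simp only [mem_filter, mem_univ, true_and]
  exact ⟨fun hzi => ⟨by_contra fun hiS => hzi (hzS i hiS), hzi⟩, And.right⟩

variable {z : ι → ZMod 2} (hzC : z ∈ C) (hz : ∀ x ∈ C, x ≠ 0 → wt z ≤ wt x)
include hzC hz

lemma wt_le_two_mul_wt_residualMap {y : ι → ZMod 2} (hyC : y ∈ C) (hyz : y + z ≠ 0) :
    wt y ≤ 2 * wt (residualMap z y) := by
  have := hz _ (C.add_mem hyC hzC) hyz
  have := two_mul_wt_residualMap_add z y
  omega

lemma finrank_le_finrank_map_residualMap_add_one :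
    Module.finrank (ZMod 2) C ≤ Module.finrank (ZMod 2) (C.map (residualMap z)) + 1 := by
  have hker : LinearMap.ker ((residualMap z).domRestrict C) ≤ (ZMod 2) ∙ (⟨z, hzC⟩ : C) := by
    intro y hy
    rw [LinearMap.mem_ker, LinearMap.domRestrict_apply] at hy
    by_cases hyz : (y : ι → ZMod 2) + z = 0
    · have hyz' : y = ⟨z, hzC⟩ :=
        Subtype.ext <| sub_eq_zero.mp <| (ZModModule.sub_eq_add _ _).trans hyz
      rw [hyz']
      exact Submodule.mem_span_singleton_self _
    · have := wt_le_two_mul_wt_residualMap hzC hz y.2 hyz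
      rw [hy, wt_eq_zero.mpr rfl] at this
      have : y = 0 := Subtype.ext (wt_eq_zero.mp (by omega))
      simp [this]
  have hrank := LinearMap.finrank_range_add_finrank_ker ((residualMap z).domRestrict C)
  rw [LinearMap.range_domRestrict] at hrank
  have := (Submodule.finrank_mono hker).trans (finrank_span_le_card {(⟨z, hzC⟩ : C)})
  rw [Set.toFinset_singleton, card_singleton] at this
  omega

lemma half_le_wt_of_mem_map_residualMap {d : ℕ} (hmin : ∀ x ∈ C, x ≠ 0 → d ≤ wt x)
    {b : ι → ZMod 2} (hb : b ∈ C.map (residualMap z)) (hb0 : b ≠ 0) : (d + 1) / 2 ≤ wt b := by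
  obtain ⟨y, hyC, rfl⟩ := hb
  have hy0 : y ≠ 0 := by
    rintro rfl
    exact hb0 (map_zero _)
  have hyz : y + z ≠ 0 := by
    intro hyz
    rw [sub_eq_zero.mp ((ZModModule.sub_eq_add _ _).trans hyz), residualMap_self] at hb0
    exact hb0 rfl
  have := hmin y hyC hy0
  have := wt_le_two_mul_wt_residualMap hzC hz hyC hyz
  omega

end Griesmer

theorem griesmerBound_le_card {ι : Type*} [Fintype ι] {k d : ℕ} (hd : 0 < d)
    {C : Submodule (ZMod 2) (ι → ZMod 2)} (hk : k ≤ Module.finrank (ZMod 2) C)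
    (hmin : ∀ x ∈ C, x ≠ 0 → d ≤ wt x) {S : Finset ι} (hS : ∀ x ∈ C, ∀ i ∉ S, x i = 0) :
    griesmerBound k d ≤ #S := by
  induction k generalizing d C S with
  | zero => simp [griesmerBound]
  | succ k ih =>
    have hC : C ≠ ⊥ := by
      rintro rfl
      simp at hk
    obtain ⟨z, hzC, hz0, hz⟩ := exists_mem_ne_zero_forall_wt_le hC
    have hres := ih (Nat.div_pos (by omega) two_pos)
      (by have := finrank_le_finrank_map_residualMap_add_one hzC hz; omega)
      (fun _ => half_le_wt_of_mem_map_residualMap hzC hz hmin)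
      (fun _ => apply_eq_zero_of_mem_map_residualMap hS z)
    have hcard := card_filter_eq_zero_add_wt (hS z hzC)
    have hdz := hmin z hzC hz0
    rw [griesmerBound_succ k hd]
    omega

theorem stmt19 :
    ¬ ∃ C : Submodule (ZMod 2) (Fin 72 → ZMod 2),
      Module.finrank (ZMod 2) C = 7 ∧ SelfOrthogonal C ∧ HasMinDist C 34 := by
  rintro ⟨C, hrank, hC, -, hmin⟩
  have hrank₀ : 6 ≤ Module.finrank (ZMod 2) hC.doublyEvenSubcode := by
    have := hC.finrank_le_finrank_doublyEvenSubcode_add_one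
    omega
  have hmin₀ : ∀ x ∈ hC.doublyEvenSubcode, x ≠ 0 → 36 ≤ wt x := by
    intro x hx hx0
    have h4 := hC.four_dvd_wt_of_mem_doublyEvenSubcode hx
    have h34 := hmin x (Submodule.map_subtype_le _ _ hx) hx0
    omega
  have hgriesmer := griesmerBound_le_card (S := univ) (by norm_num) hrank₀ hmin₀ (by simp)
  rw [card_univ, Fintype.card_fin] at hgriesmer
  have : griesmerBound 6 36 = 73 := by decide
  omega
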